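/- For all integers n ≥ 0, bt(8n+6) ≡ 0 (mod 4). -/

import Mathlib

/-!
Modulo 4 one has `(1 - y)⁴ ≡ (1 - y²)²`, so the factor of `f₄³ / (f₁⁶ f₂³)` belonging to
`y = q^i` reduces to `(1 - y)² / (1 + y²) = 1 - 2y / (1 + y²) ≡ 1 + 2y / (1 - y²)`.
Modulo 4 the product of these factors is `1 + 2 ∑ᵢ ∑_{k odd} q^{ik}`, so `bt N` is
congruent to twice the number of odd divisors of `N`. For `N = 8n + 6` these are the divisors
of `4n + 3`, which is not a square; pairing `d` with `(4n + 3) / d` shows there are evenly many.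
-/

open PowerSeries

/-- Truncated version of `fₖ = ∏_{i≥1} (1 - q^{k i})`: the product over `1 ≤ i ≤ N`,
which has the same coefficients as the infinite product in degrees `≤ N`. -/
noncomputable def fTrunc (k N : ℕ) : PowerSeries ℤ :=
  ∏ i ∈ Finset.Icc 1 N, (1 - (PowerSeries.X : PowerSeries ℤ) ^ (k * i))

/-- `bt n` is the `n`-th coefficient of `f₄³ / (f₁⁶ f₂³)`, the number of
overcubic partition triples of `n`. -/
noncomputable def bt (n : ℕ) : ℤ :=
  PowerSeries.coeff (R := ℤ) n
    ((fTrunc 4 n) ^ 3 * PowerSeries.invOfUnit ((fTrunc 1 n) ^ 6 * (fTrunc 2 n) ^ 3) 1)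

open Finset

namespace Nat

theorem div_mem_divisors {m d : ℕ} (hd : d ∈ m.divisors) : m / d ∈ m.divisors :=
  mem_divisors.mpr ⟨div_dvd_of_dvd (dvd_of_mem_divisors hd), ne_zero_of_mem_divisors hd⟩

theorem even_card_divisors_of_not_isSquare {m : ℕ} (hm : ¬IsSquare m) : Even #m.divisors := by
  rw [← ZMod.natCast_eq_zero_iff_even, card_eq_sum_ones, Nat.cast_sum, Nat.cast_one]
  refine sum_involution (fun d _ => m / d) (fun _ _ => by decide)
    (fun d hd _ hfix => hm ⟨d, ?_⟩) (fun d hd => div_mem_divisors hd)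
    (fun d hd => Nat.div_div_self (dvd_of_mem_divisors hd) (ne_zero_of_mem_divisors hd))
  rw [← Nat.div_mul_cancel (dvd_of_mem_divisors hd), hfix]

theorem not_isSquare_of_mod_four_eq_three {m : ℕ} (hm : m % 4 = 3) : ¬IsSquare m := by
  rintro ⟨r, rfl⟩
  rw [Nat.mul_mod] at hm
  have := Nat.mod_lt r (show 4 > 0 by norm_num)
  interval_cases r % 4 <;> simp at hm

theorem filter_odd_divisors_two_mul {m : ℕ} (hm : Odd m) :
    {d ∈ (2 * m).divisors | Odd d} = m.divisors := by
  ext d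
  simp only [mem_filter, mem_divisors]
  constructor
  · rintro ⟨⟨hd, hm0⟩, hodd⟩
    exact ⟨(coprime_two_right.mpr hodd).dvd_of_dvd_mul_left hd, by omega⟩
  · rintro ⟨hd, hm0⟩
    exact ⟨⟨hd.mul_left 2, by omega⟩, hm.of_dvd_nat hd⟩

theorem card_filter_Icc_dvd_odd_div (n : ℕ) :
    #{i ∈ Icc 1 n | i ∣ n ∧ Odd (n / i)} = #{d ∈ n.divisors | Odd d} := by
  have hIcc : {i ∈ Icc 1 n | i ∣ n ∧ Odd (n / i)} = {d ∈ n.divisors | Odd (n / d)} := by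
    ext i
    simp only [mem_filter, mem_Icc, mem_divisors]
    constructor
    · rintro ⟨⟨hi, hin⟩, hdvd, hodd⟩
      exact ⟨⟨hdvd, by omega⟩, hodd⟩
    · rintro ⟨⟨hdvd, hn⟩, hodd⟩
      exact ⟨⟨pos_of_dvd_of_pos hdvd (by omega), le_of_dvd (by omega) hdvd⟩, hdvd, hodd⟩
  rw [hIcc, card_filter, card_filter, sum_div_divisors n (fun d => if Odd d then 1 else 0)]

end Nat

section FourEqZero

variable {R : Type*} [CommRing R]

theorem prod_one_add_two_mul_of_four_eq_zero (h4 : (4 : R) = 0) {ι : Type*} (s : Finset ι)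
    (a : ι → R) : ∏ i ∈ s, (1 + 2 * a i) = 1 + 2 * ∑ i ∈ s, a i := by
  classical
  induction s using Finset.induction_on with
  | empty => simp
  | insert j s hj ih =>
    rw [prod_insert hj, sum_insert hj, ih]
    linear_combination (a j * ∑ i ∈ s, a i) * h4

theorem one_sub_pow_four_cube_of_four_eq_zero (h4 : (4 : R) = 0) {y a : R}
    (ha : (1 - y ^ 2) * a = y) :
    (1 - y ^ 4) ^ 3 = (1 + 2 * a) * ((1 - y) ^ 6 * (1 - y ^ 2) ^ 3) := by
  -- the coefficient of `h4` is `((1 - y⁴)³ - (1 - y)⁶ (1 - y²)² (1 - y² + 2y)) / 4` in `ℤ[y]`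
  linear_combination (-2 * (1 - y) ^ 6 * (1 - y ^ 2) ^ 2) * ha
    + (y - 6 * y ^ 3 + 10 * y ^ 4 - 2 * y ^ 5 - 14 * y ^ 6 + 16 * y ^ 7 - 2 * y ^ 8
      - 7 * y ^ 9 + 6 * y ^ 10 - 2 * y ^ 11) * h4

end FourEqZero

namespace PowerSeries

variable {R : Type*} [CommRing R]

variable (R) in
noncomputable def oddMultiples (i : ℕ) : R⟦X⟧ :=
  mk fun n => if i ∣ n ∧ Odd (n / i) then 1 else 0

theorem coeff_oddMultiples (i n : ℕ) :
    coeff n (oddMultiples R i) = if i ∣ n ∧ Odd (n / i) then 1 else 0 :=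
  coeff_mk _ _

theorem one_sub_X_sq_mul_oddMultiples_one : (1 - X ^ 2) * oddMultiples R 1 = X := by
  ext n
  rw [sub_mul, one_mul, map_sub, coeff_X_pow_mul', coeff_oddMultiples, coeff_X]
  rcases n with _ | _ | n <;> simp [coeff_oddMultiples, Nat.odd_add]

theorem oddMultiples_eq_expand {i : ℕ} (hi : i ≠ 0) :
    oddMultiples R i = expand i hi (oddMultiples R 1) := by
  ext n
  simp only [coeff_expand, coeff_oddMultiples, one_dvd, true_and, Nat.div_one, ite_and]

theorem one_sub_X_pow_mul_oddMultiples {i : ℕ} (hi : i ≠ 0) :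
    (1 - X ^ (2 * i)) * oddMultiples R i = X ^ i := by
  have h := congrArg (expand i hi) (one_sub_X_sq_mul_oddMultiples_one (R := R))
  rwa [map_mul, map_sub, map_one, map_pow, expand_X, ← pow_mul, mul_comm i 2,
    ← oddMultiples_eq_expand hi] at h

end PowerSeries

section Truncations

variable {R : Type*} [CommRing R]

theorem map_fTrunc (ρ : ℤ →+* R) (k N : ℕ) :
    map ρ (fTrunc k N) = ∏ i ∈ Icc 1 N, (1 - X ^ (k * i)) := by
  simp [fTrunc, map_prod]

theorem constantCoeff_fTrunc {k : ℕ} (hk : k ≠ 0) (N : ℕ) : constantCoeff (fTrunc k N) = 1 := by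
  rw [fTrunc, map_prod]
  refine prod_eq_one fun i hi => ?_
  have : k * i ≠ 0 := mul_ne_zero hk (by simp only [mem_Icc] at hi; omega)
  simp [this]

theorem map_fTrunc_four_cube_of_four_eq_zero (h4 : (4 : R) = 0) (ρ : ℤ →+* R) (N : ℕ) :
    map ρ (fTrunc 4 N ^ 3) = (1 + 2 * ∑ i ∈ Icc 1 N, oddMultiples R i)
      * map ρ (fTrunc 1 N ^ 6 * fTrunc 2 N ^ 3) := by
  have h4' : (4 : R⟦X⟧) = 0 := by rw [← map_ofNat C 4, h4, map_zero]
  have hfactor : ∀ i ∈ Icc 1 N, ((1 : R⟦X⟧) - X ^ (4 * i)) ^ 3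
      = (1 + 2 * oddMultiples R i) * ((1 - X ^ (1 * i)) ^ 6 * (1 - X ^ (2 * i)) ^ 3) := by
    intro i hi
    have ha : (1 - X ^ (2 * i)) * oddMultiples R i = X ^ i :=
      one_sub_X_pow_mul_oddMultiples (by simp only [mem_Icc] at hi; omega)
    simp only [one_mul, pow_mul' X] at ha ⊢
    exact one_sub_pow_four_cube_of_four_eq_zero h4' ha
  simp only [map_mul, map_pow, map_fTrunc, ← prod_pow, ← prod_mul_distrib]
  rw [prod_congr rfl hfactor, prod_mul_distrib, prod_one_add_two_mul_of_four_eq_zero h4']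

end Truncations

theorem intCast_bt_eq_two_mul_card_odd_divisors {N : ℕ} (hN : N ≠ 0) :
    (bt N : ZMod 4) = 2 * #{d ∈ N.divisors | Odd d} := by
  let ρ := Int.castRingHom (ZMod 4)
  have hinv : map ρ (fTrunc 1 N ^ 6 * fTrunc 2 N ^ 3)
      * map ρ (invOfUnit (fTrunc 1 N ^ 6 * fTrunc 2 N ^ 3) 1) = 1 := by
    rw [← map_mul, mul_invOfUnit, map_one]
    simp [constantCoeff_fTrunc]
  calc (bt N : ZMod 4)
      = coeff N (map ρ (fTrunc 4 N ^ 3 * invOfUnit (fTrunc 1 N ^ 6 * fTrunc 2 N ^ 3) 1)) := by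
        rw [coeff_map]; rfl
    _ = coeff N (1 + 2 * ∑ i ∈ Icc 1 N, oddMultiples (ZMod 4) i) := by
        rw [map_mul, map_fTrunc_four_cube_of_four_eq_zero rfl, mul_assoc, hinv, mul_one]
    _ = 2 * #{d ∈ N.divisors | Odd d} := by
        rw [map_add, coeff_one, if_neg hN, zero_add, ← map_ofNat C 2, coeff_C_mul, map_sum,
          ← Nat.card_filter_Icc_dvd_odd_div]
        simp only [coeff_oddMultiples, sum_boole]

theorem stmt3 (n : ℕ) : bt (8 * n + 6) ≡ 0 [ZMOD 4] := by
  have hodd : {d ∈ (8 * n + 6).divisors | Odd d} = (4 * n + 3).divisors := by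
    rw [show 8 * n + 6 = 2 * (4 * n + 3) by ring]
    exact Nat.filter_odd_divisors_two_mul ⟨2 * n + 1, by ring⟩
  obtain ⟨k, hk⟩ := Nat.even_card_divisors_of_not_isSquare
    (Nat.not_isSquare_of_mod_four_eq_three (m := 4 * n + 3) (by omega))
  have hbt := intCast_bt_eq_two_mul_card_odd_divisors (N := 8 * n + 6) (by omega)
  rw [hodd, hk, Nat.cast_add, ← two_mul, ← mul_assoc] at hbt
  have hzero : (bt (8 * n + 6) : ZMod 4) = 0 := by
    rw [hbt]
    reduce_mod_char
  exact Int.modEq_zero_iff_dvd.mpr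
    (by exact_mod_cast (ZMod.intCast_zmod_eq_zero_iff_dvd _ 4).mp hzero)
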